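/- arXiv:2207.08883 — 8 statements merged into one kernel-verified Lean document; each statement's English description precedes it below -/
import Mathlib

section
/- Let σ² : (0,∞) → (0,∞) and b : (0,∞) → ℝ be continuous, and suppose there exist x₂ > x₁ > 0 and M > 1 such that x·b(x)/σ²(x) ≤ -M for all x ≥ x₂. Define u(x) = exp(f(x₁) + ∫_{x₁}^x b(s)/σ²(s) ds) for a constant f(x₁) ∈ ℝ. Then u is integrable on (x₂, ∞); indeed u(x) ≤ exp(f(x₁) + ∫_{x₁}^{x₂} b/σ² ds)·(x/x₂)^{-M} for x ≥ x₂. -/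
open MeasureTheory intervalIntegral

/-- If `x·b(x)/σ²(x) ≤ -M` (with `M > 1`) for `x ≥ x₂`, then
`u(x) = exp(f₁ + ∫_{x₁}^x b/σ²)` satisfies
`u(x) ≤ exp(f₁ + ∫_{x₁}^{x₂} b/σ²)·(x/x₂)^{-M}` for `x ≥ x₂`,
and `u` is integrable on `(x₂,∞)`. -/
theorem stmt2 (σ2 b : ℝ → ℝ) (x₁ x₂ M f₁ : ℝ)
    (hσc : ContinuousOn σ2 (Set.Ioi 0)) (hbc : ContinuousOn b (Set.Ioi 0))
    (hσpos : ∀ x ∈ Set.Ioi (0 : ℝ), 0 < σ2 x)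
    (hx₁ : 0 < x₁) (hx₁₂ : x₁ < x₂) (hM : 1 < M)
    (hMb : ∀ x ≥ x₂, x * b x / σ2 x ≤ -M) :
    (∀ x ≥ x₂, Real.exp (f₁ + ∫ s in x₁..x, b s / σ2 s)
        ≤ Real.exp (f₁ + ∫ s in x₁..x₂, b s / σ2 s) * (x / x₂) ^ (-M)) ∧
    IntegrableOn (fun x => Real.exp (f₁ + ∫ s in x₁..x, b s / σ2 s)) (Set.Ioi x₂) := by
  have hx₂ : 0 < x₂ := hx₁.trans hx₁₂
  have hfc : ContinuousOn (fun s => b s / σ2 s) (Set.Ioi 0) :=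
    hbc.div hσc (fun x hx => (hσpos x hx).ne')
  have hint : ∀ a c : ℝ, 0 < a → 0 < c →
      IntervalIntegrable (fun s => b s / σ2 s) MeasureTheory.volume a c := by
    intro a c ha hc
    apply (hfc.mono ?_).intervalIntegrable
    intro y hy
    rcases le_total a c with h | h
    · exact lt_of_lt_of_le ha ((Set.uIcc_of_le h ▸ hy).1)
    · exact lt_of_lt_of_le hc ((Set.uIcc_of_ge h ▸ hy).1)
  have key : ∀ x ≥ x₂, Real.exp (f₁ + ∫ s in x₁..x, b s / σ2 s)
      ≤ Real.exp (f₁ + ∫ s in x₁..x₂, b s / σ2 s) * (x / x₂) ^ (-M) := by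
    intro x hx
    have hxpos : 0 < x := hx₂.trans_le hx
    have hsplit : (∫ s in x₁..x, b s / σ2 s)
        = (∫ s in x₁..x₂, b s / σ2 s) + ∫ s in x₂..x, b s / σ2 s :=
      (integral_add_adjacent_intervals (hint _ _ hx₁ hx₂) (hint _ _ hx₂ hxpos)).symm
    have hbound : (∫ s in x₂..x, b s / σ2 s) ≤ ∫ s in x₂..x, -M * s⁻¹ := by
      apply integral_mono_on hx (hint _ _ hx₂ hxpos)
      · apply ContinuousOn.intervalIntegrable
        apply continuousOn_const.mul (continuousOn_inv₀.mono ?_)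
        intro y hy
        have : x₂ ≤ y := (Set.uIcc_of_le hx ▸ hy).1
        exact (hx₂.trans_le this).ne'
      · intro s hs
        have hspos : 0 < s := hx₂.trans_le hs.1
        have h1 := hMb s hs.1
        have h2 : (s * b s / σ2 s) / s ≤ (-M) / s :=
          (div_le_div_iff_of_pos_right hspos).mpr h1
        have heq : s * b s / σ2 s / s = b s / σ2 s := by
          rw [mul_comm s (b s), div_right_comm, mul_div_cancel_right₀ _ hspos.ne']
        rw [heq] at h2
        simpa [div_eq_mul_inv] using h2
    have hlog : (∫ s in x₂..x, -M * s⁻¹) = -M * Real.log (x / x₂) := by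
      rw [intervalIntegral.integral_const_mul, integral_inv_of_pos hx₂ hxpos]
    have hratio : (0:ℝ) < x / x₂ := div_pos hxpos hx₂
    calc Real.exp (f₁ + ∫ s in x₁..x, b s / σ2 s)
        = Real.exp (f₁ + ∫ s in x₁..x₂, b s / σ2 s) *
            Real.exp (∫ s in x₂..x, b s / σ2 s) := by
          rw [hsplit, ← add_assoc, Real.exp_add]
      _ ≤ Real.exp (f₁ + ∫ s in x₁..x₂, b s / σ2 s) * (x / x₂) ^ (-M) := by
          apply mul_le_mul_of_nonneg_left _ (Real.exp_nonneg _)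
          rw [Real.rpow_def_of_pos hratio, mul_comm]
          exact Real.exp_le_exp.mpr (hbound.trans_eq hlog)
  refine ⟨key, ?_⟩
  -- continuity of the primitive on Ioi x₂
  have hFcont : ContinuousOn (fun x => Real.exp (f₁ + ∫ s in x₁..x, b s / σ2 s))
      (Set.Ioi x₂) := by
    apply Real.continuous_exp.comp_continuousOn
    apply continuousOn_const.add
    intro x hx
    have hxpos : 0 < x := hx₂.trans (Set.mem_Ioi.mp hx)
    have hx0 : x ∈ Set.Ioi (0:ℝ) := hxpos
    have hca : ContinuousAt (fun s => b s / σ2 s) x :=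
      hfc.continuousAt (isOpen_Ioi.mem_nhds hx0)
    exact ((integral_hasDerivAt_right (hint _ _ hx₁ hxpos)
      (hfc.stronglyMeasurableAtFilter isOpen_Ioi x hx0) hca).continuousAt).continuousWithinAt
  -- integrable majorant
  have hmaj : IntegrableOn
      (fun x => (Real.exp (f₁ + ∫ s in x₁..x₂, b s / σ2 s) / x₂ ^ (-M)) * x ^ (-M))
      (Set.Ioi x₂) :=
    (integrableOn_Ioi_rpow_of_lt (by linarith) hx₂).const_mul _
  apply Integrable.mono' hmaj
    (hFcont.aestronglyMeasurable measurableSet_Ioi)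
  filter_upwards [ae_restrict_mem measurableSet_Ioi] with x hx
  have hxpos : 0 < x := hx₂.trans (Set.mem_Ioi.mp hx)
  have := key x (le_of_lt (Set.mem_Ioi.mp hx))
  rw [Real.norm_eq_abs, abs_of_pos (Real.exp_pos _)]
  refine this.trans (le_of_eq ?_)
  rw [Real.div_rpow hxpos.le hx₂.le]
  ring
end

section
/- Let b, σ : (0,∞) → ℝ with σ > 0, and suppose there exist constants δ ∈ (0,1), x_* ∈ (0,1) such that b(x) ≤ (1+δ)b'(0)x and (1-δ)|σ'(0)|²x² ≤ σ²(x) ≤ (1+δ)|σ'(0)|²x² for x ∈ (0,x_*), where κ := 2(1+δ)b'(0)/((1-δ)|σ'(0)|²) > 1. Then the function I(x) := (1/σ²(x))·∫₁^x exp(2∫_y^x b/σ² ds) dy is not integrable on (0, x_*). In particular, -I(x) ≥ C·(1/x - x^{κ-2}/x_*^{κ-1}) for x ∈ (0,x_*) with C = 1/((1+δ)(κ-1)|σ'(0)|²). -/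
/-!
Near `0` the drift ratio satisfies `b/σ² ≤ κ/(2u)`, so for `x ≤ y ≤ x_*` the weight
`exp (2 ∫_y^x b/σ²)` is at least `(x/y)^κ`. Integrating in `y` over `[x, x_*]` bounds
`-σ²(x) I(x) = ∫_x^1 exp (2 ∫_y^x b/σ²) dy` below by `x (1 - (x/x_*)^(κ-1)) / (κ-1)`, and dividing
by `σ²(x) ≤ (1+δ) σ'(0)² x²` gives the `1/x` lower bound on `-I`, which is not integrable at `0`.
-/

open MeasureTheory intervalIntegral Set Real

theorem div_le_div_two_mul_of_le_mul_of_mul_sq_le {β σ m l u : ℝ} (hu : 0 < u) (hm : 0 ≤ m)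
    (hl : 0 < l) (hβ : β ≤ m * u) (hσ : l * u ^ 2 ≤ σ) : β / σ ≤ 2 * m / l / (2 * u) := by
  calc β / σ ≤ m * u / (l * u ^ 2) := div_le_div₀ (by positivity) hβ (by positivity) hσ
    _ = 2 * m / l / (2 * u) := by field_simp

theorem one_div_sub_rpow_div_rpow {κ x X : ℝ} (hx : 0 < x) (hX : 0 ≤ X) :
    1 / x - x ^ (κ - 2) / X ^ (κ - 1) = (1 - (x / X) ^ (κ - 1)) / x := by
  rw [div_rpow hx.le hX, show κ - 2 = κ - 1 - 1 by ring, rpow_sub_one hx.ne']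
  field_simp

theorem rpow_div_le_exp_two_mul_integral {g : ℝ → ℝ} {κ x y : ℝ} (hx : 0 < x) (hxy : x ≤ y)
    (hg : IntervalIntegrable g volume x y) (hgκ : ∀ u ∈ Ioo x y, g u ≤ κ / (2 * u)) :
    (x / y) ^ κ ≤ exp (2 * ∫ u in y..x, g u) := by
  have hy : 0 < y := hx.trans_le hxy
  have hinv : IntervalIntegrable (fun u => κ / (2 * u)) volume x y := by
    refine ContinuousOn.intervalIntegrable fun u hu => ?_
    have : 0 < u := by rw [uIcc_of_le hxy] at hu; exact hx.trans_le hu.1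
    fun_prop (disch := positivity)
  have hint : ∫ u in x..y, g u ≤ κ / 2 * (log y - log x) := by
    calc ∫ u in x..y, g u ≤ ∫ u in x..y, κ / (2 * u) :=
          integral_mono_on_of_le_Ioo hxy hg hinv hgκ
      _ = κ / 2 * (log y - log x) := by
          simp_rw [div_mul_eq_div_div, div_eq_mul_inv (κ / 2)]
          rw [intervalIntegral.integral_const_mul, integral_inv_of_pos hx hy,
            log_div hy.ne' hx.ne']
  rw [rpow_def_of_pos (div_pos hx hy), log_div hx.ne' hy.ne', integral_symm]
  exact exp_le_exp.mpr (by linarith)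

theorem integral_rpow_div_self {κ x X : ℝ} (hx : 0 < x) (hxX : x ≤ X) (hκ : κ ≠ 1) :
    ∫ y in x..X, (x / y) ^ κ = x / (κ - 1) * (1 - (x / X) ^ (κ - 1)) := by
  have hX : 0 < X := hx.trans_le hxX
  have hκ' : κ - 1 ≠ 0 := sub_ne_zero.mpr hκ
  have hpow : ∀ y ∈ uIcc x X, (x / y) ^ κ = x ^ κ * y ^ (-κ) := fun y hy => by
    rw [uIcc_of_le hxX] at hy
    rw [div_rpow hx.le (hx.le.trans hy.1), rpow_neg (hx.le.trans hy.1), div_eq_mul_inv]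
  rw [integral_congr hpow, intervalIntegral.integral_const_mul, integral_rpow
    (Or.inr ⟨by contrapose! hκ; linarith,
      by rw [uIcc_of_le hxX]; exact fun h => hx.not_ge h.1⟩)]
  have hxx : x ^ κ * x ^ (-κ + 1) = x := by rw [← rpow_add hx]; simp
  have hxX' : x ^ κ * X ^ (-κ + 1) = x * (x / X) ^ (κ - 1) := by
    rw [div_rpow hx.le hX.le, show -κ + 1 = -(κ - 1) by ring, rpow_neg hX.le,
      show κ = 1 + (κ - 1) by ring, rpow_add hx, rpow_one]
    ring_nf
  rw [show -κ + 1 = -(κ - 1) by ring] at hxx hxX' ⊢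
  rw [mul_div_assoc', mul_sub, hxx, hxX']
  field_simp
  ring

theorem div_sub_one_mul_one_sub_div_rpow_nonneg {κ x X : ℝ} (hx : 0 < x) (hxX : x ≤ X)
    (hκ : 1 < κ) : 0 ≤ x / (κ - 1) * (1 - (x / X) ^ (κ - 1)) :=
  have hX : 0 < X := hx.trans_le hxX
  mul_nonneg (div_nonneg hx.le (by linarith)) (sub_nonneg.mpr
    (rpow_le_one (by positivity) ((div_le_one hX).mpr hxX) (by linarith)))

theorem le_integral_exp_two_mul_integral {g : ℝ → ℝ} {κ x X : ℝ}
    (hg : ContinuousOn g (Ioi 0)) (hx : 0 < x) (hxX : x ≤ X) (hX : X ≤ 1) (hκ : 1 < κ)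
    (hgκ : ∀ u ∈ Ioo 0 X, g u ≤ κ / (2 * u)) :
    x / (κ - 1) * (1 - (x / X) ^ (κ - 1)) ≤ ∫ y in x..1, exp (2 * ∫ u in y..x, g u) := by
  have hgi : ∀ y, x ≤ y → IntervalIntegrable g volume x y := fun y hy =>
    (hg.mono fun u hu => hx.trans_le hu.1).intervalIntegrable_of_Icc hy
  have hF : ContinuousOn (fun y => exp (2 * ∫ u in y..x, g u)) (Icc x 1) := by
    have hprim : ContinuousOn (fun y => ∫ u in x..y, g u) (Icc x 1) := by
      simpa [uIcc_of_le (hxX.trans hX)] using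
        continuousOn_primitive_interval' (hgi 1 (hxX.trans hX)) left_mem_uIcc
    simp_rw [integral_symm x]
    fun_prop
  have hFi : ∀ a ∈ Icc x 1, ∀ b ∈ Icc x 1,
      IntervalIntegrable (fun y => exp (2 * ∫ u in y..x, g u)) volume a b :=
    fun a ha b hb => (hF.mono (uIcc_subset_Icc ha hb)).intervalIntegrable
  have hx1 : x ∈ Icc x 1 := left_mem_Icc.mpr (hxX.trans hX)
  have hX1 : X ∈ Icc x 1 := ⟨hxX, hX⟩
  have hpow : IntervalIntegrable (fun y => (x / y) ^ κ) volume x X :=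
    ((continuousOn_const.div continuousOn_id fun y hy => (hx.trans_le hy.1).ne').rpow_const
      fun _ _ => Or.inr (by linarith)).intervalIntegrable_of_Icc hxX
  calc x / (κ - 1) * (1 - (x / X) ^ (κ - 1)) = ∫ y in x..X, (x / y) ^ κ :=
        (integral_rpow_div_self hx hxX hκ.ne').symm
    _ ≤ ∫ y in x..X, exp (2 * ∫ u in y..x, g u) :=
        integral_mono_on hxX hpow (hFi x hx1 X hX1) fun y hy =>
          rpow_div_le_exp_two_mul_integral hx hy.1 (hgi y hy.1) fun u hu =>
            hgκ u ⟨hx.trans hu.1, hu.2.trans_le hy.2⟩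
    _ ≤ ∫ y in x..1, exp (2 * ∫ u in y..x, g u) := by
        rw [← integral_add_adjacent_intervals (hFi x hx1 X hX1)
          (hFi X hX1 1 (right_mem_Icc.mpr hx1.2))]
        exact le_add_of_nonneg_right (integral_nonneg hX fun y _ => (exp_pos _).le)

theorem not_integrableOn_Ioo_of_mul_inv_sub_rpow_le {f : ℝ → ℝ} {C κ A X : ℝ} (hC : 0 < C)
    (hκ : 1 < κ) (hX : 0 < X) (hf : ∀ x ∈ Ioo 0 X, C * (1 / x - x ^ (κ - 2) / A) ≤ f x) :
    ¬ IntegrableOn f (Ioo 0 X) := by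
  intro hfi
  have hpow : IntegrableOn (fun x : ℝ => x ^ (κ - 2)) (Ioo 0 X) :=
    (integrableOn_Ioo_rpow_iff hX).mpr (by linarith)
  have hinv : IntegrableOn (fun x : ℝ => x ^ (-1 : ℝ)) (Ioo 0 X) := by
    refine ((hfi.div_const C).add (hpow.div_const A)).mono'
      (measurable_id.pow_const _).aestronglyMeasurable ?_
    filter_upwards [ae_restrict_mem measurableSet_Ioo] with x hx
    have := hf x hx
    rw [rpow_neg_one, norm_of_nonneg (inv_nonneg.mpr hx.1.le), ← one_div]
    rw [← le_div_iff₀' hC] at this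
    simp only [Pi.add_apply]
    linarith
  exact lt_irrefl _ ((integrableOn_Ioo_rpow_iff hX).mp hinv)

/-- Under near-0 comparability of `b` and `σ²` with their linearizations and `κ > 1`
(the case `Λ₀ > 0`), the second solution `I(x) = (1/σ²(x)) ∫₁^x exp(2∫_y^x b/σ²) dy`
of the stationary Fokker–Planck equation satisfies
`-I(x) ≥ C(1/x - x^{κ-2}/x_*^{κ-1})` on `(0,x_*)` and is not integrable there. -/
theorem stmt3 (b σ2 : ℝ → ℝ) (c s δ xs κ : ℝ)
    (hbc : ContinuousOn b (Set.Ioi 0)) (hσc : ContinuousOn σ2 (Set.Ioi 0))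
    (hσpos : ∀ x ∈ Set.Ioi (0 : ℝ), 0 < σ2 x)
    (hδ : δ ∈ Set.Ioo (0 : ℝ) 1) (hxs : xs ∈ Set.Ioo (0 : ℝ) 1)
    (hb : ∀ x ∈ Set.Ioo (0 : ℝ) xs, b x ≤ (1 + δ) * c * x)
    (hσl : ∀ x ∈ Set.Ioo (0 : ℝ) xs, (1 - δ) * s ^ 2 * x ^ 2 ≤ σ2 x)
    (hσu : ∀ x ∈ Set.Ioo (0 : ℝ) xs, σ2 x ≤ (1 + δ) * s ^ 2 * x ^ 2)
    (hκ : κ = 2 * (1 + δ) * c / ((1 - δ) * s ^ 2)) (hκ1 : 1 < κ) :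
    (∀ x ∈ Set.Ioo (0 : ℝ) xs,
      (1 / ((1 + δ) * (κ - 1) * s ^ 2)) * (1 / x - x ^ (κ - 2) / xs ^ (κ - 1))
        ≤ -((1 / σ2 x) * ∫ y in (1 : ℝ)..x, Real.exp (2 * ∫ u in y..x, b u / σ2 u))) ∧
    ¬ IntegrableOn
      (fun x => (1 / σ2 x) * ∫ y in (1 : ℝ)..x, Real.exp (2 * ∫ u in y..x, b u / σ2 u))
      (Set.Ioo 0 xs) := by
  obtain ⟨hδ0, hδ1⟩ := hδ
  obtain ⟨hxs0, hxs1⟩ := hxs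
  have hs : 0 < s ^ 2 := (sq_nonneg s).lt_of_ne' fun h => by simp [h] at hκ; linarith
  have hc : 0 < c := by
    rw [hκ, one_lt_div (by nlinarith)] at hκ1; nlinarith
  have hratio : ∀ u ∈ Ioo 0 xs, b u / σ2 u ≤ κ / (2 * u) := fun u hu => by
    rw [hκ, mul_assoc]
    exact div_le_div_two_mul_of_le_mul_of_mul_sq_le hu.1 (by positivity) (by nlinarith)
      (hb u hu) (hσl u hu)
  have hbound : ∀ x ∈ Ioo 0 xs,
      (1 / ((1 + δ) * (κ - 1) * s ^ 2)) * (1 / x - x ^ (κ - 2) / xs ^ (κ - 1))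
        ≤ -((1 / σ2 x) * ∫ y in (1 : ℝ)..x, exp (2 * ∫ u in y..x, b u / σ2 u)) := by
    intro x ⟨hx0, hxxs⟩
    have hN := le_integral_exp_two_mul_integral (g := fun u => b u / σ2 u)
      (hbc.div hσc fun u hu => (hσpos u hu).ne') hx0 hxxs.le hxs1.le hκ1 hratio
    have hκ1' : κ - 1 ≠ 0 := by linarith
    rw [integral_symm, ← mul_neg, neg_neg, one_div_mul_eq_div (σ2 x),
      one_div_sub_rpow_div_rpow hx0 hxs0.le]
    calc 1 / ((1 + δ) * (κ - 1) * s ^ 2) * ((1 - (x / xs) ^ (κ - 1)) / x)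
        = x / (κ - 1) * (1 - (x / xs) ^ (κ - 1)) / ((1 + δ) * s ^ 2 * x ^ 2) := by field_simp
      _ ≤ x / (κ - 1) * (1 - (x / xs) ^ (κ - 1)) / σ2 x :=
          div_le_div_of_nonneg_left
            (div_sub_one_mul_one_sub_div_rpow_nonneg hx0 hxxs.le hκ1) (hσpos x hx0)
            (hσu x ⟨hx0, hxxs⟩)
      _ ≤ _ := div_le_div_of_nonneg_right hN (hσpos x hx0).le
  have hC : 0 < 1 / ((1 + δ) * (κ - 1) * s ^ 2) :=
    one_div_pos.mpr (mul_pos (mul_pos (by linarith) (by linarith)) hs)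
  exact ⟨hbound, fun hI => not_integrableOn_Ioo_of_mul_inv_sub_rpow_le hC hκ1 hxs0 hbound hI.neg⟩
end

section
/- Suppose u ∈ C²((0,∞)) ∩ L¹((0,1)) solves (1/2)(σ²u)'' - (bu)' = 0 on (0,∞), where σ, b satisfy: b ∈ C¹ with b(0)=0, b'(0)>0; σ ∈ C² with σ(0)=0, σ'(0)≠0; and Λ₀ := b'(0) - |σ'(0)|²/2 > 0. Then u = C·u₀^G for some constant C, where u₀^G(x) = (1/σ²(x))·exp(2∫₁^x b/σ² ds). -/
/-!
Writing `w = σ²u`, the equation integrates once to `w' = 2(b/σ²) w + k`, and the integrating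
factor `exp (-Φ)`, `Φ = 2∫₁ˣ b/σ²`, gives `u = (A + k G) u₀` with `G x = ∫₁ˣ exp (-Φ)`.
Near `0`, `x Φ'(x) → α = 2b'(0)/σ'(0)² > 1` and `σ² ≍ x²`, so `exp Φ ≲ x^β` for some `β > 1`
and `u₀ ≲ x^(β-2)` is integrable on `(0,1)`. On the other hand, since `Φ` grows by at most a
bounded amount on `[x, 2x]`, `|G x| u₀ x ≥ (∫ₓ²ˣ exp (Φ x - Φ t) dt) / σ(x)² ≳ x / x²` is
not, so integrability of `u` forces `k = 0`.
-/

open MeasureTheory intervalIntegral Set Filter Real Topology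

lemma hasDerivAt_integral_one_of_continuousOn {f : ℝ → ℝ} (hf : ContinuousOn f (Ioi 0))
    {x : ℝ} (hx : x ∈ Ioi (0 : ℝ)) : HasDerivAt (fun y => ∫ t in (1 : ℝ)..y, f t) (f x) x :=
  integral_hasDerivAt_right
    (hf.mono (ordConnected_Ioi.uIcc_subset (mem_Ioi.2 one_pos) hx)).intervalIntegrable
    (hf.stronglyMeasurableAtFilter isOpen_Ioi x hx) (hf.continuousAt (isOpen_Ioi.mem_nhds hx))

lemma eq_of_hasDerivAt_zero_of_mem_Ioi {f : ℝ → ℝ} (hf : ∀ x ∈ Ioi (0 : ℝ), HasDerivAt f 0 x)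
    {x : ℝ} (hx : x ∈ Ioi 0) : f x = f 1 :=
  isOpen_Ioi.is_const_of_deriv_eq_zero isPreconnected_Ioi
    (fun y hy => (hf y hy).differentiableAt.differentiableWithinAt) (fun y hy => (hf y hy).deriv)
    hx (mem_Ioi.2 one_pos)

lemma exists_hasDerivAt_eq_of_half_deriv_deriv_sub_deriv_eq_zero {w v : ℝ → ℝ}
    (hw : ContDiffOn ℝ 2 w (Ioi 0)) (hv : ContDiffOn ℝ 1 v (Ioi 0))
    (hwv : ∀ x ∈ Ioi (0 : ℝ), (1 / 2) * deriv (deriv w) x - deriv v x = 0) :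
    ∃ c, ∀ x ∈ Ioi (0 : ℝ), HasDerivAt w (2 * v x + c) x := by
  have hasDerivAt_deriv {f : ℝ → ℝ} (hf : ContDiffOn ℝ 1 f (Ioi 0)) {x : ℝ} (hx : x ∈ Ioi 0) :
      HasDerivAt f (deriv f x) x :=
    ((hf.differentiableOn one_ne_zero).differentiableAt (isOpen_Ioi.mem_nhds hx)).hasDerivAt
  have hw' : ContDiffOn ℝ 1 (deriv w) (Ioi 0) := hw.deriv_of_isOpen isOpen_Ioi le_rfl
  refine ⟨deriv w 1 - 2 * v 1, fun x hx => ?_⟩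
  have hconst : deriv w x - 2 * v x = deriv w 1 - 2 * v 1 :=
    eq_of_hasDerivAt_zero_of_mem_Ioi (f := fun y => deriv w y - 2 * v y) (fun y hy => by
      refine ((hasDerivAt_deriv hw' hy).sub ((hasDerivAt_deriv hv hy).const_mul 2)).congr_deriv ?_
      linarith [hwv y hy]) hx
  convert hasDerivAt_deriv (hw.of_le one_le_two) hx using 1
  linarith

lemma eq_mul_exp_of_hasDerivAt_eq_mul_add {w Φ φ : ℝ → ℝ} {k : ℝ}
    (hΦ : ∀ x ∈ Ioi (0 : ℝ), HasDerivAt Φ (φ x) x)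
    (hw : ∀ x ∈ Ioi (0 : ℝ), HasDerivAt w (φ x * w x + k) x) {x : ℝ} (hx : x ∈ Ioi 0) :
    w x = (w 1 * exp (-Φ 1) + k * ∫ t in (1 : ℝ)..x, exp (-Φ t)) * exp (Φ x) := by
  have hE : ContinuousOn (fun t => exp (-Φ t)) (Ioi 0) :=
    fun t ht => (hΦ t ht).continuousAt.neg.rexp.continuousWithinAt
  have hconst := eq_of_hasDerivAt_zero_of_mem_Ioi
    (f := fun y => w y * exp (-Φ y) - k * ∫ t in (1 : ℝ)..y, exp (-Φ t)) (fun y hy => by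
      refine (((hw y hy).mul (hΦ y hy).neg.exp).sub
        ((hasDerivAt_integral_one_of_continuousOn hE hy).const_mul k)).congr_deriv ?_
      simp only [Pi.neg_apply]
      ring) hx
  simp only [integral_same, mul_zero, sub_zero] at hconst
  rw [← hconst, sub_add_cancel, mul_assoc, ← exp_add, neg_add_cancel, exp_zero, mul_one]

lemma monotoneOn_sub_mul_log {Φ φ : ℝ → ℝ} {δ m : ℝ}
    (hΦ : ∀ x ∈ Ioi (0 : ℝ), HasDerivAt Φ (φ x) x) (hm : ∀ x ∈ Ioc 0 δ, m ≤ x * φ x) :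
    MonotoneOn (fun x => Φ x - m * log x) (Ioc 0 δ) := by
  have hd : ∀ x ∈ Ioc 0 δ, HasDerivAt (fun x => Φ x - m * log x) (φ x - m * x⁻¹) x :=
    fun x hx => (hΦ x hx.1).sub ((hasDerivAt_log hx.1.ne').const_mul m)
  refine monotoneOn_of_hasDerivWithinAt_nonneg (convex_Ioc 0 δ)
    (fun x hx => (hd x hx).continuousAt.continuousWithinAt)
    (fun x hx => (hd x (interior_subset hx)).hasDerivWithinAt) fun x hx => ?_
  have hx := interior_subset hx
  rw [sub_nonneg, ← div_eq_mul_inv, div_le_iff₀ hx.1, mul_comm]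
  exact hm x hx

lemma antitoneOn_sub_mul_log {Φ φ : ℝ → ℝ} {δ M : ℝ}
    (hΦ : ∀ x ∈ Ioi (0 : ℝ), HasDerivAt Φ (φ x) x) (hM : ∀ x ∈ Ioc 0 δ, x * φ x ≤ M) :
    AntitoneOn (fun x => Φ x - M * log x) (Ioc 0 δ) := by
  have := monotoneOn_sub_mul_log (Φ := -Φ) (m := -M) (fun x hx => (hΦ x hx).neg)
    fun x hx => by simpa using hM x hx
  intro x hx y hy hxy
  have := this hx hy hxy
  simp only [Pi.neg_apply] at this
  linarith

lemma tendsto_div_nhdsGT_of_hasDerivWithinAt {f : ℝ → ℝ} {f' : ℝ}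
    (hf : HasDerivWithinAt f f' (Ici 0) 0) (hf0 : f 0 = 0) :
    Tendsto (fun x => f x / x) (𝓝[>] 0) (𝓝 f') := by
  refine ((hasDerivWithinAt_iff_tendsto_slope' (lt_irrefl 0)).1 hf.Ioi_of_Ici).congr fun x => ?_
  rw [slope_def_field, hf0, sub_zero, sub_zero]

lemma integrableOn_Ioo_zero_one_of_norm_le_rpow {f : ℝ → ℝ} {C s : ℝ}
    (hf : ContinuousOn f (Ioi 0)) (hs : -1 < s) (hle : ∀ᶠ x in 𝓝[>] 0, ‖f x‖ ≤ C * x ^ s) :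
    IntegrableOn f (Ioo 0 1) := by
  obtain ⟨δ, hδ, hδle⟩ := mem_nhdsGT_iff_exists_Ioc_subset.1 hle
  have hnear : IntegrableOn f (Ioo 0 δ) :=
    Integrable.mono' (((integrableOn_Ioo_rpow_iff hδ).2 hs).const_mul C)
      ((hf.mono Ioo_subset_Ioi_self).aestronglyMeasurable measurableSet_Ioo)
      ((ae_restrict_iff' measurableSet_Ioo).2
        (Eventually.of_forall fun x hx => hδle (Ioo_subset_Ioc_self hx)))
  have hfar : IntegrableOn f (Icc δ 1) :=
    (hf.mono fun x hx => (mem_Ioi.1 hδ).trans_le hx.1).integrableOn_Icc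
  exact (hnear.union hfar).mono_set fun x hx =>
    (lt_or_ge x δ).imp (fun h => ⟨hx.1, h⟩) fun h => ⟨h, hx.2.le⟩

lemma not_integrableOn_Ioo_zero_one_of_mul_inv_le_norm {f : ℝ → ℝ} {c : ℝ} (hc : 0 < c)
    (hle : ∀ᶠ x in 𝓝[>] 0, c * x⁻¹ ≤ ‖f x‖) : ¬ IntegrableOn f (Ioo 0 1) := by
  intro hf
  obtain ⟨δ, hδ, hδle⟩ :=
    mem_nhdsGT_iff_exists_Ioc_subset.1 (hle.and (Ioo_mem_nhdsGT one_pos))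
  have hinv : IntegrableOn (fun x => c * x⁻¹) (Ioo 0 δ) :=
    Integrable.mono (hf.mono_set fun x hx => (hδle (Ioo_subset_Ioc_self hx)).2)
      (measurable_const.mul measurable_inv).aestronglyMeasurable
      ((ae_restrict_iff' measurableSet_Ioo).2 (Eventually.of_forall fun x hx => by
        rw [norm_of_nonneg (mul_nonneg hc.le (inv_nonneg.2 hx.1.le))]
        exact (hδle (Ioo_subset_Ioc_self hx)).1))
  have hrpow : IntegrableOn (fun x : ℝ => x ^ (-1 : ℝ)) (Ioo 0 δ) := by
    unfold IntegrableOn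
    simpa only [rpow_neg_one, ← mul_assoc, inv_mul_cancel₀ hc.ne', one_mul] using
      hinv.const_mul c⁻¹
  exact lt_irrefl _ ((integrableOn_Ioo_rpow_iff hδ).1 hrpow)

section NearZero

variable {Φ φ : ℝ → ℝ} {α : ℝ}

lemma exists_exp_le_mul_rpow (hΦ : ∀ x ∈ Ioi (0 : ℝ), HasDerivAt Φ (φ x) x)
    (hφ : Tendsto (fun x => x * φ x) (𝓝[>] 0) (𝓝 α)) {β : ℝ} (hβ : β < α) :
    ∃ C, ∀ᶠ x in 𝓝[>] 0, exp (Φ x) ≤ C * x ^ β := by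
  obtain ⟨δ, hδ, hδle⟩ :=
    mem_nhdsGT_iff_exists_Ioc_subset.1 (hφ.eventually (eventually_ge_nhds hβ))
  have hmono := monotoneOn_sub_mul_log hΦ hδle
  refine ⟨exp (Φ δ - β * log δ), eventually_of_mem (Ioc_mem_nhdsGT hδ) fun x hx => ?_⟩
  calc exp (Φ x) = exp (Φ x - β * log x) * x ^ β := by
        rw [rpow_def_of_pos hx.1, ← exp_add]; ring_nf
    _ ≤ exp (Φ δ - β * log δ) * x ^ β :=
        mul_le_mul_of_nonneg_right (exp_le_exp.2 (hmono hx ⟨hδ, le_rfl⟩ hx.2))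
          (rpow_nonneg hx.1.le β)

lemma exists_mul_le_exp_mul_integral (hΦ : ∀ x ∈ Ioi (0 : ℝ), HasDerivAt Φ (φ x) x)
    (hφ : Tendsto (fun x => x * φ x) (𝓝[>] 0) (𝓝 α)) :
    ∃ c > 0, ∀ᶠ x in 𝓝[>] 0, c * x ≤ exp (Φ x) * ∫ t in x..1, exp (-Φ t) := by
  set M := |α| + 1
  obtain ⟨δ, hδ, hδle⟩ := mem_nhdsGT_iff_exists_Ioc_subset.1
    (hφ.eventually (eventually_le_nhds ((le_abs_self α).trans_lt (lt_add_one _))))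
  have hanti := antitoneOn_sub_mul_log hΦ hδle
  have hΦc : ContinuousOn Φ (Ioi 0) := fun x hx => (hΦ x hx).continuousAt.continuousWithinAt
  refine ⟨exp (-(M * log 2)), exp_pos _, ?_⟩
  filter_upwards [Ioo_mem_nhdsGT (lt_min (half_pos (mem_Ioi.1 hδ)) one_half_pos)] with x hx
  have hx0 : 0 < x := hx.1
  have h2xδ : 2 * x ≤ δ := by linarith [hx.2.trans_le (min_le_left _ _)]
  have h2x1 : 2 * x ≤ 1 := by linarith [hx.2.trans_le (min_le_right _ _)]
  have hE {y : ℝ} (hy : 0 < y) : IntervalIntegrable (fun t => exp (Φ x - Φ t)) volume x y :=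
    ((continuousOn_const.sub hΦc).rexp.mono
      (ordConnected_Ioi.uIcc_subset (mem_Ioi.2 hx0) (mem_Ioi.2 hy))).intervalIntegrable
  -- `x φ x ≤ M` makes `Φ - M log` antitone, so `Φ` grows by at most `M log 2` on `[x, 2x]`.
  have hbound : ∀ t ∈ Icc x (2 * x), exp (-(M * log 2)) ≤ exp (Φ x - Φ t) := by
    intro t ht
    have ht0 : 0 < t := hx0.trans_le ht.1
    have hΦt := hanti ⟨hx0, by linarith⟩ ⟨ht0, ht.2.trans h2xδ⟩ ht.1
    have hlog : log t - log x ≤ log 2 := by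
      rw [← log_div ht0.ne' hx0.ne']
      exact log_le_log (div_pos ht0 hx0) ((div_le_iff₀ hx0).2 ht.2)
    have hM : 0 ≤ M := by positivity
    gcongr
    nlinarith [mul_le_mul_of_nonneg_left hlog hM]
  calc exp (-(M * log 2)) * x = ∫ _ in x..2 * x, exp (-(M * log 2)) := by
        rw [intervalIntegral.integral_const, smul_eq_mul]; ring
    _ ≤ ∫ t in x..2 * x, exp (Φ x - Φ t) :=
        integral_mono_on (by linarith) intervalIntegrable_const (hE (by linarith)) hbound
    _ ≤ ∫ t in x..1, exp (Φ x - Φ t) :=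
        integral_mono_interval le_rfl (by linarith) h2x1
          (ae_of_all _ fun t => (exp_pos _).le) (hE one_pos)
    _ = exp (Φ x) * ∫ t in x..1, exp (-Φ t) := by
        rw [← intervalIntegral.integral_const_mul]
        simp only [← exp_add, sub_eq_add_neg]

variable {ρ : ℝ → ℝ} {r : ℝ}

lemma integrableOn_exp_div (hΦ : ∀ x ∈ Ioi (0 : ℝ), HasDerivAt Φ (φ x) x)
    (hφ : Tendsto (fun x => x * φ x) (𝓝[>] 0) (𝓝 α)) (hα : 1 < α)
    (hρ : Tendsto (fun x => ρ x / x ^ 2) (𝓝[>] 0) (𝓝 r)) (hr : 0 < r)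
    (hρc : ContinuousOn ρ (Ioi 0)) (hρ0 : ∀ x ∈ Ioi (0 : ℝ), ρ x ≠ 0) :
    IntegrableOn (fun x => exp (Φ x) / ρ x) (Ioo 0 1) := by
  obtain ⟨C, hC⟩ := exists_exp_le_mul_rpow hΦ hφ (β := (1 + α) / 2) (by linarith)
  have hΦc : ContinuousOn Φ (Ioi 0) := fun x hx => (hΦ x hx).continuousAt.continuousWithinAt
  refine integrableOn_Ioo_zero_one_of_norm_le_rpow (C := 2 * C / r) (s := (1 + α) / 2 - 2)
    (hΦc.rexp.div hρc hρ0) (by linarith) ?_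
  filter_upwards [hC, hρ.eventually (eventually_gt_nhds (half_lt_self hr)), self_mem_nhdsWithin]
    with x hCx hρx hx
  have hx2 : (0 : ℝ) < x ^ 2 := pow_pos hx 2
  rw [lt_div_iff₀ hx2] at hρx
  have hρpos : 0 < ρ x := by nlinarith
  rw [norm_of_nonneg (div_pos (exp_pos _) hρpos).le, rpow_sub hx, rpow_two]
  calc exp (Φ x) / ρ x ≤ C * x ^ ((1 + α) / 2) / (r / 2 * x ^ 2) :=
        div_le_div₀ ((exp_pos _).le.trans hCx) hCx (by positivity) hρx.le
    _ = 2 * C / r * (x ^ ((1 + α) / 2) / x ^ 2) := by field_simp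

lemma not_integrableOn_integral_mul_exp_div (hΦ : ∀ x ∈ Ioi (0 : ℝ), HasDerivAt Φ (φ x) x)
    (hφ : Tendsto (fun x => x * φ x) (𝓝[>] 0) (𝓝 α))
    (hρ : Tendsto (fun x => ρ x / x ^ 2) (𝓝[>] 0) (𝓝 r)) (hr : 0 < r) :
    ¬ IntegrableOn (fun x => (∫ t in (1 : ℝ)..x, exp (-Φ t)) * (exp (Φ x) / ρ x))
      (Ioo 0 1) := by
  obtain ⟨c, hc, hcle⟩ := exists_mul_le_exp_mul_integral hΦ hφ
  refine not_integrableOn_Ioo_zero_one_of_mul_inv_le_norm (c := c / (2 * r)) (by positivity) ?_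
  filter_upwards [hcle, hρ.eventually (Ioo_mem_nhds (half_lt_self hr) (lt_two_mul_self hr)),
    self_mem_nhdsWithin] with x hcx hρx hx
  have hx2 : (0 : ℝ) < x ^ 2 := pow_pos hx 2
  rw [lt_div_iff₀ hx2, div_lt_iff₀ hx2] at hρx
  have hρpos : 0 < ρ x := by nlinarith
  rw [integral_symm, norm_eq_abs]
  refine le_trans ?_ (neg_le_abs _)
  calc c / (2 * r) * x⁻¹ = c * x / (2 * r * x ^ 2) := by field_simp
    _ ≤ (exp (Φ x) * ∫ t in x..1, exp (-Φ t)) / ρ x :=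
        div_le_div₀ ((mul_pos hc hx).le.trans hcx) hcx hρpos hρx.2.le
    _ = -(-(∫ t in x..1, exp (-Φ t)) * (exp (Φ x) / ρ x)) := by ring

end NearZero

theorem stmt4_general (b σ u : ℝ → ℝ)
    (hb : ContDiffOn ℝ 1 b (Set.Ici 0)) (hb0 : b 0 = 0)
    (hσ : ContDiffOn ℝ 2 σ (Set.Ici 0)) (hσ0 : σ 0 = 0)
    (hσ'0 : derivWithin σ (Set.Ici 0) 0 ≠ 0)
    (hσpos : ∀ x ∈ Set.Ioi (0 : ℝ), σ x ≠ 0)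
    (hΛ : 0 < derivWithin b (Set.Ici 0) 0 - (derivWithin σ (Set.Ici 0) 0) ^ 2 / 2)
    (hu : ContDiffOn ℝ 2 u (Set.Ioi 0))
    (huL1 : IntegrableOn u (Set.Ioo 0 1))
    (hode : ∀ x ∈ Set.Ioi (0 : ℝ),
      (1 / 2) * deriv (deriv (fun y => σ y ^ 2 * u y)) x
        - deriv (fun y => b y * u y) x = 0) :
    ∃ C : ℝ, ∀ x ∈ Set.Ioi (0 : ℝ),
      u x = C * ((1 / σ x ^ 2) * Real.exp (2 * ∫ s in (1 : ℝ)..x, b s / σ s ^ 2)) := by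
  set b' := derivWithin b (Ici 0) 0
  set σ' := derivWithin σ (Ici 0) 0
  set Φ : ℝ → ℝ := fun x => 2 * ∫ s in (1 : ℝ)..x, b s / σ s ^ 2
  have hσ2 : ContinuousOn (fun x => σ x ^ 2) (Ioi 0) :=
    (hσ.continuousOn.mono Ioi_subset_Ici_self).pow 2
  have hσ2ne : ∀ x ∈ Ioi (0 : ℝ), σ x ^ 2 ≠ 0 := fun x hx => pow_ne_zero 2 (hσpos x hx)
  have hΦ : ∀ x ∈ Ioi (0 : ℝ), HasDerivAt Φ (2 * (b x / σ x ^ 2)) x := fun x hx =>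
    (hasDerivAt_integral_one_of_continuousOn
      ((hb.continuousOn.mono Ioi_subset_Ici_self).div hσ2 hσ2ne) hx).const_mul 2
  obtain ⟨k, hk⟩ := exists_hasDerivAt_eq_of_half_deriv_deriv_sub_deriv_eq_zero
    (((hσ.mono Ioi_subset_Ici_self).pow 2).mul hu)
    ((hb.mono Ioi_subset_Ici_self).mul (hu.of_le one_le_two)) hode
  set A := σ 1 ^ 2 * u 1 * exp (-Φ 1)
  have hsol : ∀ x ∈ Ioi (0 : ℝ),
      u x = (A + k * ∫ t in (1 : ℝ)..x, exp (-Φ t)) * (exp (Φ x) / σ x ^ 2) := by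
    intro x hx
    have hw := eq_mul_exp_of_hasDerivAt_eq_mul_add (k := k) hΦ
      (fun y hy => (hk y hy).congr_deriv (by field_simp [hσpos y hy])) hx
    rw [mul_div_assoc', ← hw]
    field_simp [hσpos x hx]
  have hρ : Tendsto (fun x => σ x ^ 2 / x ^ 2) (𝓝[>] 0) (𝓝 (σ' ^ 2)) := by
    simpa only [div_pow] using (tendsto_div_nhdsGT_of_hasDerivWithinAt
      (hσ.differentiableOn two_ne_zero 0 self_mem_Ici).hasDerivWithinAt hσ0).pow 2
  have hφ : Tendsto (fun x => x * (2 * (b x / σ x ^ 2))) (𝓝[>] 0) (𝓝 (2 * b' / σ' ^ 2)) := by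
    refine (((tendsto_div_nhdsGT_of_hasDerivWithinAt
      (hb.differentiableOn one_ne_zero 0 self_mem_Ici).hasDerivWithinAt hb0).const_mul 2).div
        hρ (pow_ne_zero 2 hσ'0)).congr' ?_
    filter_upwards [self_mem_nhdsWithin] with x hx
    simp only [Pi.div_apply]
    field_simp [hσpos x hx, (mem_Ioi.1 hx).ne']
  have hσ'2 : 0 < σ' ^ 2 := by positivity
  have hα : 1 < 2 * b' / σ' ^ 2 := by rw [lt_div_iff₀ hσ'2]; linarith
  have hu₀ := integrableOn_exp_div hΦ hφ hα hρ hσ'2 hσ2 hσ2ne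
  have hk0 : k = 0 := by
    by_contra hk0
    refine not_integrableOn_integral_mul_exp_div hΦ hφ hρ hσ'2 ?_
    have hGu₀ : IntegrableOn (fun x => (u x - A * (exp (Φ x) / σ x ^ 2)) / k) (Ioo 0 1) :=
      (huL1.sub (hu₀.const_mul A)).div_const k
    refine hGu₀.congr_fun (fun x hx => ?_) measurableSet_Ioo
    simp only [hsol x hx.1]
    field_simp
    ring
  refine ⟨A, fun x hx => ?_⟩
  rw [hsol x hx, hk0]
  ring

/-- Lemma 3.4: if `u ∈ C²((0,∞)) ∩ L¹((0,1))` solves `(1/2)(σ²u)'' - (bu)' = 0`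
on `(0,∞)`, with `b ∈ C¹`, `b(0)=0`, `b'(0)>0`, `σ ∈ C²`, `σ(0)=0`, `σ'(0)≠0`,
and `Λ₀ = b'(0) - |σ'(0)|²/2 > 0`, then `u = C·u₀^G` for some constant `C`,
where `u₀^G(x) = (1/σ²(x))·exp(2∫₁^x b/σ²)`. -/
theorem stmt4 (b σ u : ℝ → ℝ)
    (hb : ContDiffOn ℝ 1 b (Set.Ici 0)) (hb0 : b 0 = 0)
    (hb'0 : 0 < derivWithin b (Set.Ici 0) 0)
    (hσ : ContDiffOn ℝ 2 σ (Set.Ici 0)) (hσ0 : σ 0 = 0)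
    (hσ'0 : derivWithin σ (Set.Ici 0) 0 ≠ 0)
    (hσpos : ∀ x ∈ Set.Ioi (0 : ℝ), σ x ≠ 0)
    (hΛ : 0 < derivWithin b (Set.Ici 0) 0 - (derivWithin σ (Set.Ici 0) 0) ^ 2 / 2)
    (hu : ContDiffOn ℝ 2 u (Set.Ioi 0))
    (huL1 : IntegrableOn u (Set.Ioo 0 1))
    (hode : ∀ x ∈ Set.Ioi (0 : ℝ),
      (1 / 2) * deriv (deriv (fun y => σ y ^ 2 * u y)) x
        - deriv (fun y => b y * u y) x = 0) :
    ∃ C : ℝ, ∀ x ∈ Set.Ioi (0 : ℝ),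
      u x = C * ((1 / σ x ^ 2) * Real.exp (2 * ∫ s in (1 : ℝ)..x, b s / σ s ^ 2)) :=
  stmt4_general b σ u hb hb0 hσ hσ0 hσ'0 hσpos hΛ hu huL1 hode
end

section
/- Let φ ∈ C²((0,∞)) be positive and satisfy (e^{-2V}φ')' = -c·(2/α)·e^{-2V}·φ on (0,∞), where c > 0, α ∈ C((0,∞)) is positive, and V ∈ C¹((0,∞)) satisfies V(x) - V(x₁) → ∞ as x → ∞ for each fixed x₁. Then φ' > 0 on (0,∞). -/
open Filter Set

/-!
Writing `W = e^{-2V} φ'`, the equation says `W' < 0`, so `W` is strictly decreasing. If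
`φ'(x) ≤ 0` at some `x`, then `W ≤ W(x + 1) < 0` beyond `x + 1`, hence
`φ' = e^{2V} W ≤ e^{2V} W(x + 1) → -∞` because `V → ∞`. Then `φ → -∞`, contradicting `φ > 0`.
-/

/-- A negative derivative forces differentiability, hence continuity. -/
theorem strictAntiOn_of_forall_deriv_neg {D : Set ℝ} (hD : Convex ℝ D) {f : ℝ → ℝ}
    (hf' : ∀ x ∈ D, deriv f x < 0) : StrictAntiOn f D :=
  strictAntiOn_of_deriv_neg hD
    (fun x hx => (differentiableAt_of_deriv_ne_zero (hf' x hx).ne).continuousAt.continuousWithinAt)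
    (fun x hx => hf' x (interior_subset hx))

theorem tendsto_atBot_of_tendsto_deriv_atBot {f : ℝ → ℝ}
    (hf' : Tendsto (deriv f) atTop atBot) : Tendsto f atTop atBot := by
  obtain ⟨a, ha⟩ := eventually_atTop.mp (hf'.eventually_le_atBot (-1))
  have hdiff : ∀ x ∈ Ici a, DifferentiableAt ℝ f x := fun x hx =>
    differentiableAt_of_deriv_ne_zero (by linarith [ha x hx])
  have hslope : ∀ y ∈ Ici a, f y - f a ≤ -1 * (y - a) := fun y hy =>
    (convex_Ici a).image_sub_le_mul_sub_of_deriv_le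
      (fun x hx => (hdiff x hx).continuousAt.continuousWithinAt)
      (fun x hx => (hdiff x (interior_subset hx)).differentiableWithinAt)
      (fun x hx => ha x (interior_subset hx)) a self_mem_Ici y hy hy
  refine tendsto_atBot_mono' atTop (eventually_atTop.mpr ⟨a, fun y hy => ?_⟩)
    (tendsto_atBot_add_const_left atTop (f a + a) tendsto_neg_atTop_atBot)
  linarith [hslope y hy]

theorem stmt5_general (φ V α : ℝ → ℝ) (c : ℝ) (hc : 0 < c)
    (hφpos : ∀ x ∈ Set.Ioi (0 : ℝ), 0 < φ x)
    (hαpos : ∀ x ∈ Set.Ioi (0 : ℝ), 0 < α x)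
    (hVgrow : ∀ x₁ ∈ Set.Ioi (0 : ℝ),
      Tendsto (fun x => V x - V x₁) atTop atTop)
    (heq : ∀ x ∈ Set.Ioi (0 : ℝ),
      deriv (fun y => Real.exp (-2 * V y) * deriv φ y) x
        = -c * (2 / α x) * Real.exp (-2 * V x) * φ x) :
    ∀ x ∈ Set.Ioi (0 : ℝ), 0 < deriv φ x := by
  set W : ℝ → ℝ := fun y => Real.exp (-2 * V y) * deriv φ y
  have hW_anti : StrictAntiOn W (Ioi 0) := strictAntiOn_of_forall_deriv_neg (convex_Ioi 0)
    fun y hy => by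
      have := hαpos y hy
      have := hφpos y hy
      rw [heq y hy, neg_mul, neg_mul, neg_mul, neg_lt_zero]
      positivity
  have hφ'_eq : ∀ s, deriv φ s = Real.exp (2 * V s) * W s := fun s => by
    rw [← mul_assoc, ← Real.exp_add]
    simp
  intro x hx
  by_contra! hx_nonpos
  have hx1 : x + 1 ∈ Ioi (0 : ℝ) := by simp only [mem_Ioi] at hx ⊢; linarith
  have hW_neg : W (x + 1) < 0 := (hW_anti hx hx1 (lt_add_one x)).trans_le
    (mul_nonpos_of_nonneg_of_nonpos (Real.exp_pos _).le hx_nonpos)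
  have hV : Tendsto V atTop atTop := by
    simpa using tendsto_atTop_add_const_right atTop (V x) (hVgrow x hx)
  have hφ'_bot : Tendsto (deriv φ) atTop atBot := by
    refine tendsto_atBot_mono' atTop ?_
      ((Real.tendsto_exp_atTop.comp (hV.const_mul_atTop two_pos)).atTop_mul_const_of_neg hW_neg)
    filter_upwards [eventually_gt_atTop (x + 1)] with s hs
    rw [hφ'_eq]
    exact mul_le_mul_of_nonneg_left (hW_anti hx1 (hx1.trans hs) hs).le (Real.exp_pos _).le
  obtain ⟨s, hφs_neg, hs_pos⟩ := ((tendsto_atBot_of_tendsto_deriv_atBot hφ'_bot).eventually_lt_atBot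
    0 |>.and (eventually_gt_atTop 0)).exists
  exact (hφpos s hs_pos).not_gt hφs_neg

/-- Lemma 5.5 (monotonicity of the principal eigenfunction): if `φ > 0` is `C²` on
`(0,∞)` and solves `(e^{-2V}φ')' = -c·(2/α)·e^{-2V}·φ` with `c > 0`, `α > 0`
continuous, `V ∈ C¹` with `V(x) - V(x₁) → ∞` as `x → ∞`, then `φ' > 0` on `(0,∞)`. -/
theorem stmt5 (φ V α : ℝ → ℝ) (c : ℝ) (hc : 0 < c)
    (hφ : ContDiffOn ℝ 2 φ (Set.Ioi 0))
    (hφpos : ∀ x ∈ Set.Ioi (0 : ℝ), 0 < φ x)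
    (hα : ContinuousOn α (Set.Ioi 0))
    (hαpos : ∀ x ∈ Set.Ioi (0 : ℝ), 0 < α x)
    (hV : ContDiffOn ℝ 1 V (Set.Ioi 0))
    (hVgrow : ∀ x₁ ∈ Set.Ioi (0 : ℝ),
      Tendsto (fun x => V x - V x₁) atTop atTop)
    (heq : ∀ x ∈ Set.Ioi (0 : ℝ),
      deriv (fun y => Real.exp (-2 * V y) * deriv φ y) x
        = -c * (2 / α x) * Real.exp (-2 * V x) * φ x) :
    ∀ x ∈ Set.Ioi (0 : ℝ), 0 < deriv φ x :=
  stmt5_general φ V α c hc hφpos hαpos hVgrow heq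
end

section
/- Let a, b : [0,∞) → ℝ with a ∈ C²([0,∞)), a(0)=0, a'(0)>0. Fix δ ∈ (0,1/2) with (1-δ)²/(1+δ) = 8/9 and suppose κ > 0 is small enough that (3/4)s² + 2c(1+δ)/(1-δ) < A/(18κ) where A = a'(0), s = |σ'(0)|, c = b'(0) > 0. If, for x ∈ (0, κε²): (1-δ)Aε²x ≤ α(x) ≤ (1+δ)Aε²x for a function α, (1-δ)Aε² ≤ α'(x) ≤ (1+δ)Aε², |α''(x)| ≤ 3s², 0 < b(x) < 2cx, and b'(x) > 0, then 2W(x) := 3|α'(x)|²/(16α(x)) - α''(x)/4 + b'(x) - b(x)α'(x)/α(x) + b(x)²/α(x) ≥ (1/9)·Aε²/x. -/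
set_option maxHeartbeats 800000 in
/-- Core computation of Lemma 3.2(2): under the stated bounds on `α, α', α'', b, b'`
on `(0, κε²)`, the Schrödinger potential expression satisfies
`2W ≥ (1/9)·a'(0)ε²/x`. Here `A = a'(0)`, `s = |σ'(0)|`, `c = b'(0)`. -/
theorem stmt12 (α b : ℝ → ℝ) (A s c δ κ ε : ℝ)
    (hA : 0 < A) (hc : 0 < c) (hε : 0 < ε)
    (hδ : 0 < δ) (hδ2 : δ < 1 / 2) (hδ3 : (1 - δ) ^ 2 / (1 + δ) = 8 / 9)
    (hκ : 0 < κ)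
    (hκs : (3 / 4) * s ^ 2 + 2 * c * (1 + δ) / (1 - δ) < A / (18 * κ))
    (hαl : ∀ x ∈ Set.Ioo (0 : ℝ) (κ * ε ^ 2), (1 - δ) * A * ε ^ 2 * x ≤ α x)
    (hαu : ∀ x ∈ Set.Ioo (0 : ℝ) (κ * ε ^ 2), α x ≤ (1 + δ) * A * ε ^ 2 * x)
    (hα'l : ∀ x ∈ Set.Ioo (0 : ℝ) (κ * ε ^ 2), (1 - δ) * A * ε ^ 2 ≤ deriv α x)
    (hα'u : ∀ x ∈ Set.Ioo (0 : ℝ) (κ * ε ^ 2), deriv α x ≤ (1 + δ) * A * ε ^ 2)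
    (hα'' : ∀ x ∈ Set.Ioo (0 : ℝ) (κ * ε ^ 2), |deriv (deriv α) x| ≤ 3 * s ^ 2)
    (hbx : ∀ x ∈ Set.Ioo (0 : ℝ) (κ * ε ^ 2), 0 < b x ∧ b x < 2 * c * x)
    (hb' : ∀ x ∈ Set.Ioo (0 : ℝ) (κ * ε ^ 2), 0 < deriv b x) :
    ∀ x ∈ Set.Ioo (0 : ℝ) (κ * ε ^ 2),
      (1 / 9) * A * ε ^ 2 / x ≤
        3 * (deriv α x) ^ 2 / (16 * α x) - (deriv (deriv α) x) / 4 + deriv b x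
          - b x * deriv α x / α x + (b x) ^ 2 / α x := by
  intro x hx
  obtain ⟨hx0, hx1⟩ := hx
  have hδ1 : (0:ℝ) < 1 - δ := by linarith
  have hδp : (0:ℝ) < 1 + δ := by linarith
  have hE : (0:ℝ) < A * ε ^ 2 := by positivity
  have hαl' := hαl x ⟨hx0, hx1⟩
  have hαu' := hαu x ⟨hx0, hx1⟩
  have hdl := hα'l x ⟨hx0, hx1⟩
  have hdu := hα'u x ⟨hx0, hx1⟩
  have hdd := (abs_le.mp (hα'' x ⟨hx0, hx1⟩)).2
  have hb1 := (hbx x ⟨hx0, hx1⟩).1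
  have hb2 := (hbx x ⟨hx0, hx1⟩).2
  have hb'x := hb' x ⟨hx0, hx1⟩
  have hαpos : 0 < α x := lt_of_lt_of_le (by positivity) hαl'
  have hdpos : 0 < deriv α x := lt_of_lt_of_le (by positivity) hdl
  have hδ3' : 9 * (1 - δ) ^ 2 = 8 * (1 + δ) := by
    field_simp at hδ3; linarith
  -- term 1
  have h1 : (1/6) * (A * ε ^ 2 / x) ≤ 3 * (deriv α x) ^ 2 / (16 * α x) := by
    rw [show (1:ℝ)/6 * (A * ε ^ 2 / x) = (A * ε ^ 2 / 6) / x by ring,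
      div_le_div_iff₀ hx0 (by positivity)]
    have hd2 : ((1-δ)*A*ε^2)^2 * x ≤ (deriv α x)^2 * x :=
      mul_le_mul_of_nonneg_right (by nlinarith [mul_self_le_mul_self (by positivity : (0:ℝ) ≤ (1-δ)*A*ε^2) hdl]) hx0.le
    have heq : ((1-δ)*A*ε^2)^2 * x = (8/9)*((1+δ)*(A*ε^2*((A*ε^2)*x))) := by
      linear_combination ((A*ε^2)^2*x/9) * hδ3'
    have hαE : (A*ε^2) * α x ≤ (A*ε^2) * ((1+δ)*A*ε^2*x) :=
      mul_le_mul_of_nonneg_left hαu' hE.le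
    nlinarith [hd2, heq, hαE]
  -- term 4
  have h3 : b x * deriv α x / α x ≤ 2 * c * (1 + δ) / (1 - δ) := by
    rw [div_le_div_iff₀ hαpos hδ1]
    nlinarith [mul_le_mul hb2.le hdu hdpos.le (by positivity : (0:ℝ) ≤ 2 * c * x),
      mul_le_mul_of_nonneg_left hαl' (by positivity : (0:ℝ) ≤ 2 * c * (1 + δ))]
  -- term 5
  have h4 : (0:ℝ) ≤ (b x) ^ 2 / α x := by positivity
  -- constant bound
  have h5 : A / (18 * κ) ≤ (1/18) * (A * ε ^ 2 / x) := by
    rw [div_le_iff₀ (by positivity : (0:ℝ) < 18 * κ)]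
    have : A * ε ^ 2 / x * κ = (A * ε ^ 2 * κ) / x := by ring
    rw [show (1:ℝ)/18 * (A * ε ^ 2 / x) * (18 * κ) = (A * ε ^ 2 * κ) / x by ring,
      le_div_iff₀ hx0]
    nlinarith [mul_lt_mul_of_pos_left hx1 hA]
  have hgoal : (1/9) * A * ε ^ 2 / x = (1/9) * (A * ε ^ 2 / x) := by ring
  rw [hgoal]
  linarith
end

section
/- Let α : (0,κε²) → (0,∞) satisfy α(x) ≤ (1+δ)Aε²x with A = a'(0) > 0, δ ∈ (0,1). Then the change of variable ξ(x) = ∫₀^x α(s)^{-1/2} ds satisfies ξ(x) ≥ 2√x/√((1+δ)ε²A) for x ∈ (0,κε²). Consequently, if W satisfies 2W(ξ(x)) ≥ (1/9)·Aε²/x on (0,κε²), then 2W(y) ≥ (4/(9(1+δ)))·y^{-2} for y ∈ (0, 2√κ/√((1+δ)A)). -/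
open MeasureTheory intervalIntegral

/-- Lemma 3.2(2), change-of-variable step: with `ξ(x) = ∫₀^x α(s)^{-1/2} ds` and
`α(x) ≤ (1+δ)Aε²x` on `(0,κε²)`, one has `ξ(x) ≥ 2√x/√((1+δ)ε²A)`; consequently,
a `(1/9)Aε²/x` lower bound for `2W∘ξ` transfers to `2W(y) ≥ (4/(9(1+δ)))y⁻²`
for `y ∈ (0, 2√κ/√((1+δ)A))`. -/
theorem stmt13 (α W : ℝ → ℝ) (A δ κ ε : ℝ)
    (hA : 0 < A) (hδ : δ ∈ Set.Ioo (0 : ℝ) 1) (hκ : 0 < κ) (hε : 0 < ε)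
    (hαpos : ∀ x ∈ Set.Ioo (0 : ℝ) (κ * ε ^ 2), 0 < α x)
    (hαu : ∀ x ∈ Set.Ioo (0 : ℝ) (κ * ε ^ 2), α x ≤ (1 + δ) * A * ε ^ 2 * x)
    (hint : IntervalIntegrable (fun s => (α s) ^ (-(1 / 2) : ℝ)) volume 0 (κ * ε ^ 2)) :
    (∀ x ∈ Set.Ioo (0 : ℝ) (κ * ε ^ 2),
      2 * Real.sqrt x / Real.sqrt ((1 + δ) * ε ^ 2 * A)
        ≤ ∫ s in (0 : ℝ)..x, (α s) ^ (-(1 / 2) : ℝ)) ∧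
    ((∀ x ∈ Set.Ioo (0 : ℝ) (κ * ε ^ 2),
        (1 / 9) * A * ε ^ 2 / x
          ≤ 2 * W (∫ s in (0 : ℝ)..x, (α s) ^ (-(1 / 2) : ℝ))) →
      ∀ y ∈ Set.Ioo (0 : ℝ) (2 * Real.sqrt κ / Real.sqrt ((1 + δ) * A)),
        4 / (9 * (1 + δ)) / y ^ 2 ≤ 2 * W y) := by
  set b := κ * ε ^ 2 with hb
  have hbpos : 0 < b := by positivity
  set C : ℝ := (1 + δ) * A * ε ^ 2 with hC
  have hCpos : 0 < C := by have := hδ.1; positivity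
  have hCeq : (1 + δ) * ε ^ 2 * A = C := by ring
  set ξ : ℝ → ℝ := fun x => ∫ s in (0 : ℝ)..x, (α s) ^ (-(1 / 2) : ℝ) with hξ
  -- Part 1
  have part1 : ∀ x ∈ Set.Ioo (0 : ℝ) b,
      2 * Real.sqrt x / Real.sqrt ((1 + δ) * ε ^ 2 * A) ≤ ξ x := by
    intro x hx
    have hx0 : 0 < x := hx.1
    have hintg : IntervalIntegrable (fun s : ℝ => C ^ (-(1 / 2) : ℝ) * s ^ (-(1 / 2) : ℝ))
        volume 0 x :=
      (intervalIntegrable_rpow' (by norm_num)).const_mul _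
    have hintα : IntervalIntegrable (fun s => (α s) ^ (-(1 / 2) : ℝ)) volume 0 x :=
      hint.mono_set (by
        rw [Set.uIcc_of_le hx0.le, Set.uIcc_of_le hbpos.le]
        exact Set.Icc_subset_Icc le_rfl hx.2.le)
    have hmono : ∀ s ∈ Set.Icc (0 : ℝ) x,
        C ^ (-(1 / 2) : ℝ) * s ^ (-(1 / 2) : ℝ) ≤ (α s) ^ (-(1 / 2) : ℝ) := by
      intro s hs
      rcases eq_or_lt_of_le hs.1 with h0 | h0
      · rw [← h0]
        rw [Real.zero_rpow (by norm_num), mul_zero]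
        rcases le_or_gt 0 (α 0) with h | h
        · exact Real.rpow_nonneg h _
        · rw [Real.rpow_def_of_neg h]
          have : Real.cos (-(1 / 2) * Real.pi) = 0 := by
            rw [show (-(1 / 2) : ℝ) * Real.pi = -(Real.pi / 2) by ring, Real.cos_neg,
              Real.cos_pi_div_two]
          rw [this, mul_zero]
      · have hsb : s ∈ Set.Ioo (0 : ℝ) b := ⟨h0, lt_of_le_of_lt hs.2 hx.2⟩
        rw [← Real.mul_rpow hCpos.le h0.le]
        exact Real.rpow_le_rpow_of_nonpos (hαpos s hsb) (hαu s hsb) (by norm_num)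
    have hle : ∫ s in (0:ℝ)..x, C ^ (-(1 / 2) : ℝ) * s ^ (-(1 / 2) : ℝ) ≤ ξ x :=
      integral_mono_on hx0.le hintg hintα hmono
    have hcalc : ∫ s in (0:ℝ)..x, C ^ (-(1 / 2) : ℝ) * s ^ (-(1 / 2) : ℝ)
        = 2 * Real.sqrt x / Real.sqrt ((1 + δ) * ε ^ 2 * A) := by
      rw [intervalIntegral.integral_const_mul, integral_rpow (Or.inl (by norm_num))]
      rw [hCeq, show (-(1/2 : ℝ) + 1) = 1/2 by norm_num, Real.zero_rpow (by norm_num),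
        Real.rpow_neg hCpos.le, ← Real.sqrt_eq_rpow, ← Real.sqrt_eq_rpow]
      field_simp
      ring
    linarith
  refine ⟨part1, ?_⟩
  -- Part 2
  intro hW y hy
  have hy0 : 0 < y := hy.1
  have hsC : 0 < Real.sqrt C := Real.sqrt_pos.mpr hCpos
  have hsb' : Real.sqrt b = Real.sqrt κ * ε := by
    rw [hb, Real.sqrt_mul hκ.le, Real.sqrt_sq hε.le]
  have hsC' : Real.sqrt C = Real.sqrt ((1 + δ) * A) * ε := by
    rw [hC, show (1 + δ) * A * ε ^ 2 = ((1 + δ) * A) * ε ^ 2 by ring,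
      Real.sqrt_mul (by have := hδ.1; positivity), Real.sqrt_sq hε.le]
  have hyb : y < 2 * Real.sqrt b / Real.sqrt C := by
    rw [hsb', hsC']
    have h1 : 0 < Real.sqrt ((1 + δ) * A) := Real.sqrt_pos.mpr (by have := hδ.1; positivity)
    calc y < 2 * Real.sqrt κ / Real.sqrt ((1 + δ) * A) := hy.2
      _ = 2 * (Real.sqrt κ * ε) / (Real.sqrt ((1 + δ) * A) * ε) := by
          rw [show 2 * (Real.sqrt κ * ε) = (2 * Real.sqrt κ) * ε by ring,
            mul_div_mul_right _ _ hε.ne']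
  -- choose x₁ ∈ (xmin, b)
  set xmin : ℝ := y ^ 2 * C / 4 with hxmin
  have hxminb : xmin < b := by
    have h2 : y * Real.sqrt C < 2 * Real.sqrt b := by
      rw [lt_div_iff₀ hsC] at hyb; linarith
    have h3 : (y * Real.sqrt C) ^ 2 < (2 * Real.sqrt b) ^ 2 := by
      exact pow_lt_pow_left₀ h2 (by positivity) (by norm_num)
    rw [mul_pow, mul_pow, Real.sq_sqrt hCpos.le, Real.sq_sqrt hbpos.le] at h3
    rw [hxmin]; nlinarith
  set x₁ : ℝ := (xmin + b) / 2 with hx₁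
  have hxminpos : 0 ≤ xmin := by positivity
  have hx₁mem : x₁ ∈ Set.Ioo (0 : ℝ) b := ⟨by positivity, by rw [hx₁]; linarith⟩
  have hx₁gt : y < ξ x₁ := by
    have h1 := part1 x₁ hx₁mem
    rw [hCeq] at h1
    have h2 : y < 2 * Real.sqrt x₁ / Real.sqrt C := by
      rw [lt_div_iff₀ hsC]
      have : Real.sqrt xmin < Real.sqrt x₁ := by
        apply Real.sqrt_lt_sqrt hxminpos; rw [hx₁]; linarith
      have h4 : Real.sqrt xmin = y * Real.sqrt C / 2 := by
        rw [hxmin, show y ^ 2 * C / 4 = (y * Real.sqrt C / 2) ^ 2 by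
          rw [div_pow, mul_pow, Real.sq_sqrt hCpos.le]; ring]
        exact Real.sqrt_sq (by positivity)
      nlinarith
    linarith
  -- IVT
  have hcont : ContinuousOn ξ (Set.uIcc (0 : ℝ) b) :=
    intervalIntegral.continuousOn_primitive_interval' hint Set.left_mem_uIcc
  have hcont' : ContinuousOn ξ (Set.Icc (0 : ℝ) x₁) := by
    apply hcont.mono
    rw [Set.uIcc_of_le hbpos.le]
    exact Set.Icc_subset_Icc le_rfl hx₁mem.2.le
  have hξ0 : ξ 0 = 0 := intervalIntegral.integral_same
  have hIVT : ∃ x ∈ Set.Icc (0 : ℝ) x₁, ξ x = y := by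
    apply intermediate_value_Icc hx₁mem.1.le hcont'
    rw [hξ0]; exact ⟨hy0.le, hx₁gt.le⟩
  obtain ⟨x, hxmem, hxy⟩ := hIVT
  have hxpos : 0 < x := by
    rcases eq_or_lt_of_le hxmem.1 with h | h
    · exfalso; rw [← h, hξ0] at hxy; linarith
    · exact h
  have hxIoo : x ∈ Set.Ioo (0 : ℝ) b := ⟨hxpos, lt_of_le_of_lt hxmem.2 hx₁mem.2⟩
  have hWx := hW x hxIoo
  rw [show (∫ s in (0:ℝ)..x, (α s) ^ (-(1 / 2) : ℝ)) = ξ x from rfl, hxy] at hWx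
  -- x ≤ xmin
  have hxle : x ≤ xmin := by
    have h1 := part1 x hxIoo
    rw [hCeq, hxy] at h1
    have h2 : 2 * Real.sqrt x ≤ y * Real.sqrt C := by
      rw [div_le_iff₀ hsC] at h1; linarith
    have h3 : (2 * Real.sqrt x) ^ 2 ≤ (y * Real.sqrt C) ^ 2 := by
      exact pow_le_pow_left₀ (by positivity) h2 2
    rw [mul_pow, mul_pow, Real.sq_sqrt hxpos.le, Real.sq_sqrt hCpos.le] at h3
    rw [hxmin]; nlinarith
  have hfinal : 4 / (9 * (1 + δ)) / y ^ 2 ≤ (1 / 9) * A * ε ^ 2 / x := by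
    rw [div_le_div_iff₀ (by positivity) hxpos]
    have hxminle : 4 / (9 * (1 + δ)) * xmin = (1/9) * A * ε ^ 2 * y ^ 2 := by
      rw [hxmin, hC]
      have hδ1 : (0:ℝ) < 1 + δ := by have := hδ.1; linarith
      field_simp
    have h5 : 4 / (9 * (1 + δ)) * x ≤ 4 / (9 * (1 + δ)) * xmin := by
      apply mul_le_mul_of_nonneg_left hxle (by have := hδ.1; positivity)
    calc 4 / (9 * (1 + δ)) * x ≤ (1/9) * A * ε ^ 2 * y ^ 2 := by rw [← hxminle]; exact h5
      _ = 1 / 9 * A * ε ^ 2 * y ^ 2 := by norm_num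
  linarith
end

section
/- Let s : (0,β] → ℝ be defined by s(x) = ∫_{x_*}^x exp(-2∫_{x_*}^y b(u)/α(u) du) dy where x_* ∈ (0,β), and suppose b(y)/α(y) ≤ κ_+/(2y') with the bound ∫_y^{x_*} b/α ds ≤ (κ_+/2)·ln((A + Bx_*)/(A + By)) for 0<y<x_*, where A = ε²a'(0), B = |σ'(0)|², and κ_+ > 1. Then -s(0+) = ∫₀^{x_*} exp(2∫_y^{x_*} b/α ds) dy ≤ ∫₀^{x_*} ((A + Bx_*)/(A + By))^{κ_+} dy ≤ (2x_*^{κ_+}B^{κ_+-1}/(κ_+-1))·A^{1-κ_+}, i.e., -s(0+) ≲ C·ε^{-2(κ_+-1)}. -/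
open MeasureTheory intervalIntegral

/-- Scale-function estimate of Lemma 6.1(2): if
`∫_y^{x_*} b/α ≤ (κ/2)·ln((A+Bx_*)/(A+By))` for `y ∈ (0,x_*)` with `κ > 1`, then
`-s(0+) = ∫₀^{x_*} exp(2∫_y^{x_*} b/α) dy ≤ ∫₀^{x_*} ((A+Bx_*)/(A+By))^κ dy
≤ (2x_*^κ B^{κ-1}/(κ-1))·A^{1-κ}` (for `A = ε²a'(0)` small, i.e. `A+Bx_* ≤ 2^{1/κ}Bx_*`). -/
theorem stmt15 (b α : ℝ → ℝ) (A B κ xs : ℝ)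
    (hA : 0 < A) (hB : 0 < B) (hκ : 1 < κ) (hxs : 0 < xs)
    (hsmall : A + B * xs ≤ (2 : ℝ) ^ (1 / κ) * (B * xs))
    (hint : IntegrableOn (fun s => b s / α s) (Set.Ioc 0 xs))
    (hlog : ∀ y ∈ Set.Ioo (0 : ℝ) xs,
      (∫ s in y..xs, b s / α s) ≤ (κ / 2) * Real.log ((A + B * xs) / (A + B * y))) :
    (∫ y in (0 : ℝ)..xs, Real.exp (2 * ∫ s in y..xs, b s / α s))
      ≤ (∫ y in (0 : ℝ)..xs, ((A + B * xs) / (A + B * y)) ^ κ) ∧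
    (∫ y in (0 : ℝ)..xs, ((A + B * xs) / (A + B * y)) ^ κ)
      ≤ 2 * xs ^ κ * B ^ (κ - 1) / (κ - 1) * A ^ (1 - κ) := by
  have hAxs : 0 < A + B * xs := by positivity
  have hpos : ∀ y ∈ Set.Icc (0 : ℝ) xs, 0 < A + B * y := by
    intro y hy
    nlinarith [hy.1]
  -- integrability of g
  have hg : IntervalIntegrable (fun y => ((A + B * xs) / (A + B * y)) ^ κ)
      volume 0 xs := by
    apply ContinuousOn.intervalIntegrable
    apply ContinuousOn.rpow_const
    · exact (continuousOn_const.div (by fun_prop) (fun y hy => by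
        rw [Set.uIcc_of_le hxs.le] at hy
        exact (hpos y hy).ne'))
    · intro y hy
      rw [Set.uIcc_of_le hxs.le] at hy
      exact Or.inl (div_pos hAxs (hpos y hy)).ne'
  -- integrability of f
  have hintIcc : IntegrableOn (fun s => b s / α s) (Set.uIcc 0 xs) := by
    rw [Set.uIcc_of_le hxs.le, integrableOn_Icc_iff_integrableOn_Ioc]
    exact hint
  have hcont : ContinuousOn (fun y => ∫ s in y..xs, b s / α s) (Set.uIcc 0 xs) :=
    continuousOn_primitive_interval_left hintIcc
  have hf : IntervalIntegrable (fun y => Real.exp (2 * ∫ s in y..xs, b s / α s))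
      volume 0 xs := by
    apply ContinuousOn.intervalIntegrable
    exact Real.continuous_exp.comp_continuousOn (continuousOn_const.mul hcont)
  -- pointwise a.e. bound
  have hle : (fun y => Real.exp (2 * ∫ s in y..xs, b s / α s))
      ≤ᵐ[volume.restrict (Set.Icc 0 xs)]
      fun y => ((A + B * xs) / (A + B * y)) ^ κ := by
    rw [← Measure.restrict_congr_set Ioo_ae_eq_Icc]
    refine ae_restrict_of_forall_mem measurableSet_Ioo ?_
    intro y hy
    have hAy : 0 < A + B * y := hpos y ⟨hy.1.le, hy.2.le⟩
    have hr : 0 < (A + B * xs) / (A + B * y) := by positivity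
    calc Real.exp (2 * ∫ s in y..xs, b s / α s)
        ≤ Real.exp (2 * ((κ / 2) * Real.log ((A + B * xs) / (A + B * y)))) := by
          exact Real.exp_le_exp.2 (by nlinarith [hlog y hy])
      _ = ((A + B * xs) / (A + B * y)) ^ κ := by
          rw [Real.rpow_def_of_pos hr]
          ring_nf
  refine ⟨integral_mono_ae_restrict hxs.le hf hg hle, ?_⟩
  -- second inequality: compute the integral
  have hκ0 : κ ≠ 0 := by linarith
  have hrw : ∀ y ∈ Set.uIcc (0:ℝ) xs,
      ((A + B * xs) / (A + B * y)) ^ κ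
        = (A + B * xs) ^ κ * (fun u => u ^ (-κ)) (A + B * y) := by
    intro y hy
    rw [Set.uIcc_of_le hxs.le] at hy
    have hAy : 0 < A + B * y := hpos y hy
    show _ = (A + B * xs) ^ κ * (A + B * y) ^ (-κ)
    rw [Real.div_rpow hAxs.le hAy.le, Real.rpow_neg hAy.le, div_eq_mul_inv]
  rw [intervalIntegral.integral_congr hrw]
  have hcompute : (∫ y in (0:ℝ)..xs, (fun u => u ^ (-κ)) (A + B * y))
      = B⁻¹ * (((A + B * xs) ^ (-κ + 1) - A ^ (-κ + 1)) / (-κ + 1)) := by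
    rw [intervalIntegral.integral_comp_add_mul (fun u => u ^ (-κ)) hB.ne' A]
    rw [integral_rpow]
    · simp [mul_zero, add_zero, smul_eq_mul]
    · right
      constructor
      · intro h; rw [neg_eq_iff_eq_neg] at h; linarith
      · rw [Set.uIcc_of_le (by nlinarith : A + B * 0 ≤ A + B * xs)]
        intro h
        simp only [mul_zero, add_zero] at h
        exact absurd h.1 (by linarith)
  rw [intervalIntegral.integral_const_mul, hcompute]
  -- now pure algebraic estimates
  have h1 : (A + B * xs) ^ κ ≤ 2 * (B ^ κ * xs ^ κ) := by
    calc (A + B * xs) ^ κ ≤ ((2:ℝ) ^ (1/κ) * (B * xs)) ^ κ :=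
          Real.rpow_le_rpow hAxs.le hsmall (by linarith)
      _ = 2 * (B ^ κ * xs ^ κ) := by
          rw [Real.mul_rpow (by positivity) (by positivity),
            Real.mul_rpow hB.le hxs.le, ← Real.rpow_mul (by norm_num),
            one_div, inv_mul_cancel₀ hκ0, Real.rpow_one]
  have h2 : B⁻¹ * (((A + B * xs) ^ (-κ + 1) - A ^ (-κ + 1)) / (-κ + 1))
      ≤ B⁻¹ * (A ^ (1 - κ) / (κ - 1)) := by
    have hx1 : (0:ℝ) < (A + B * xs) ^ (-κ + 1) := Real.rpow_pos_of_pos hAxs _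
    have : ((A + B * xs) ^ (-κ + 1) - A ^ (-κ + 1)) / (-κ + 1)
        = (A ^ (-κ + 1) - (A + B * xs) ^ (-κ + 1)) / (κ - 1) := by
      rw [div_eq_div_iff (by linarith) (by linarith)]
      ring
    rw [this]
    have h1κ : (-κ + 1) = (1 - κ) := by ring
    rw [h1κ]
    have hx2 : 0 < (A + B * xs) ^ (1 - κ) := Real.rpow_pos_of_pos hAxs _
    have hκ1 : 0 < κ - 1 := by linarith
    gcongr
    linarith
  have hnn : (0:ℝ) ≤ B⁻¹ * (A ^ (1 - κ) / (κ - 1)) := by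
    exact mul_nonneg (inv_nonneg.2 hB.le)
      (div_nonneg (Real.rpow_pos_of_pos hA (1 - κ)).le (by linarith))
  calc (A + B * xs) ^ κ * (B⁻¹ * (((A + B * xs) ^ (-κ + 1) - A ^ (-κ + 1)) / (-κ + 1)))
      ≤ 2 * (B ^ κ * xs ^ κ) * (B⁻¹ * (A ^ (1 - κ) / (κ - 1))) := by
        apply mul_le_mul h1 h2 ?_ (by positivity)
        calc B⁻¹ * (((A + B * xs) ^ (-κ + 1) - A ^ (-κ + 1)) / (-κ + 1))
            = ∫ y in (0:ℝ)..xs, (fun u => u ^ (-κ)) (A + B * y) := hcompute.symm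
          _ ≥ 0 := by
              apply intervalIntegral.integral_nonneg hxs.le
              intro u hu
              exact (Real.rpow_pos_of_pos (hpos u hu) _).le
    _ = 2 * xs ^ κ * B ^ (κ - 1) / (κ - 1) * A ^ (1 - κ) := by
        rw [Real.rpow_sub hB, Real.rpow_one]
        field_simp
end

section
/- Let A = ε²a'(0) > 0, B = |σ'(0)|² > 0, κ ∈ (0,1), δ ∈ (0,1), and x_* > 0. Then r := (1/(1+δ))·∫₀^{x_*/2} (A + By)^{-1} ∫_y^{2y} (1/z)·((A + Bz)/(A + By))^{κ-1} dz dy ≥ (2^{κ-1}·ln 2/((1+δ)B))·ln(1 + Bx_*/(2A)). In particular, r ≥ C·|ln ε| asymptotically as ε → 0, with C = 2^κ·ln 2/((1+δ)B) (up to the asymptotic factor). -/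
/-!
On `[y, 2y]` the ratio `(A + Bz)/(A + By)` lies in `[1, 2]`, so for `κ < 1` the inner integrand
is squeezed between `2^(κ-1)/z` and `1/z`, whose integrals over `[y, 2y]` are `2^(κ-1) ln 2` and
`ln 2`. The lower bound leaves `2^(κ-1) ln 2 ∫₀^{x_*/2} (A + By)⁻¹ dy
= (2^(κ-1) ln 2 / B) ln(1 + B x_*/(2A))`; the upper bound, together with continuity of the inner
integral in `y`, makes the outer integrand integrable.
-/

open intervalIntegral MeasureTheory Set

theorem continuousOn_primitive_Ioi {g : ℝ → ℝ} (hg : ContinuousOn g (Ioi 0)) {a : ℝ}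
    (ha : 0 < a) : ContinuousOn (fun x => ∫ z in a..x, g z) (Ioi 0) := fun x hx =>
  (integral_hasDerivAt_right
    (hg.mono fun _ hz => lt_of_lt_of_le (lt_min ha hx) hz.1).intervalIntegrable
    (hg.stronglyMeasurableAtFilter isOpen_Ioi x hx)
    (hg.continuousAt (Ioi_mem_nhds hx))).continuousAt.continuousWithinAt

theorem continuousOn_integral_two_mul {g : ℝ → ℝ} (hg : ContinuousOn g (Ioi 0)) :
    ContinuousOn (fun y => ∫ z in y..2 * y, g z) (Ioi 0) := by
  have hint : ∀ x ∈ Ioi (0 : ℝ), IntervalIntegrable g volume 1 x := fun x hx =>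
    (hg.mono fun _ hz => lt_of_lt_of_le (lt_min one_pos hx) hz.1).intervalIntegrable
  have hF := continuousOn_primitive_Ioi hg one_pos
  refine ((hF.comp (continuousOn_const.mul continuousOn_id) fun y (hy : 0 < y) =>
    (by positivity : (0 : ℝ) < 2 * y)).sub hF).congr fun y (hy : 0 < y) => ?_
  exact (integral_interval_sub_left (hint _ (by positivity : (0 : ℝ) < 2 * y)) (hint y hy)).symm

theorem intervalIntegrable_inv_two_mul {y : ℝ} (hy : 0 < y) :
    IntervalIntegrable (fun z : ℝ => z⁻¹) volume y (2 * y) :=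
  intervalIntegrable_inv_iff.2 (Or.inr (notMem_uIcc_of_lt hy (by linarith)))

theorem integral_inv_two_mul {y : ℝ} (hy : 0 < y) : ∫ z in y..2 * y, z⁻¹ = Real.log 2 := by
  rw [integral_inv_of_pos hy (by positivity), mul_div_cancel_right₀ _ hy.ne']

theorem integral_inv_affine {A B r : ℝ} (hA : 0 < A) (hB : 0 < B) (hr : 0 ≤ r) :
    ∫ y in (0 : ℝ)..r, (A + B * y)⁻¹ = B⁻¹ * Real.log (1 + B * r / A) := by
  rw [integral_comp_add_mul (fun x => x⁻¹) hB.ne', mul_zero, add_zero,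
    integral_inv_of_pos hA (by positivity), smul_eq_mul, add_div, div_self hA.ne']

section Window

variable {A B p y : ℝ}

noncomputable def windowIntegral (A B p y : ℝ) : ℝ :=
  ∫ z in y..2 * y, (1 / z) * ((A + B * z) / (A + B * y)) ^ p

theorem one_le_affine_ratio (hA : 0 < A) (hB : 0 ≤ B) (hy : 0 ≤ y) {z : ℝ} (hz : y ≤ z) :
    1 ≤ (A + B * z) / (A + B * y) := by
  rw [one_le_div (by positivity)]
  nlinarith

theorem affine_ratio_le_two (hA : 0 < A) (hB : 0 ≤ B) (hy : 0 ≤ y) {z : ℝ} (hz : z ≤ 2 * y) :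
    (A + B * z) / (A + B * y) ≤ 2 := by
  rw [div_le_iff₀ (by positivity)]
  nlinarith

theorem intervalIntegrable_windowIntegrand (hA : 0 < A) (hB : 0 ≤ B) (hy : 0 < y) :
    IntervalIntegrable (fun z => (1 / z) * ((A + B * z) / (A + B * y)) ^ p) volume y (2 * y) := by
  refine ContinuousOn.intervalIntegrable_of_Icc (by linarith) ?_
  refine (continuousOn_const.div continuousOn_id fun z hz => (hy.trans_le hz.1).ne').mul ?_
  refine ContinuousOn.rpow_const (by fun_prop) fun z hz => Or.inl ?_
  have := hy.trans_le hz.1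
  positivity

theorem two_rpow_mul_log_two_le_windowIntegral (hA : 0 < A) (hB : 0 ≤ B) (hp : p ≤ 0)
    (hy : 0 < y) : 2 ^ p * Real.log 2 ≤ windowIntegral A B p y := by
  calc 2 ^ p * Real.log 2 = ∫ z in y..2 * y, 2 ^ p * z⁻¹ := by
        rw [intervalIntegral.integral_const_mul, integral_inv_two_mul hy]
    _ ≤ windowIntegral A B p y := by
      refine integral_mono_on (by linarith) ((intervalIntegrable_inv_two_mul hy).const_mul _)
        (intervalIntegrable_windowIntegrand hA hB hy) fun z hz => ?_
      have hz0 : 0 < z := hy.trans_le hz.1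
      rw [one_div, mul_comm]
      exact mul_le_mul_of_nonneg_left (Real.rpow_le_rpow_of_nonpos
        (by linarith [one_le_affine_ratio hA hB hy.le hz.1])
        (affine_ratio_le_two hA hB hy.le hz.2) hp) (by positivity)

theorem windowIntegral_le_log_two (hA : 0 < A) (hB : 0 ≤ B) (hp : p ≤ 0) (hy : 0 < y) :
    windowIntegral A B p y ≤ Real.log 2 := by
  calc windowIntegral A B p y ≤ ∫ z in y..2 * y, z⁻¹ := by
        refine integral_mono_on (by linarith) (intervalIntegrable_windowIntegrand hA hB hy)
          (intervalIntegrable_inv_two_mul hy) fun z hz => ?_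
        have hz0 : 0 < z := hy.trans_le hz.1
        rw [one_div]
        exact mul_le_of_le_one_right (by positivity)
          (Real.rpow_le_one_of_one_le_of_nonpos (one_le_affine_ratio hA hB hy.le hz.1) hp)
    _ = Real.log 2 := integral_inv_two_mul hy

theorem windowIntegral_eq (hA : 0 < A) (hB : 0 ≤ B) (hy : 0 < y) :
    windowIntegral A B p y = (A + B * y) ^ (-p) * ∫ z in y..2 * y, (1 / z) * (A + B * z) ^ p := by
  rw [windowIntegral, ← intervalIntegral.integral_const_mul]
  refine integral_congr fun z hz => ?_
  have hz0 : 0 < z := by rw [uIcc_of_le (by linarith)] at hz; exact hy.trans_le hz.1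
  rw [Real.div_rpow (by positivity) (by positivity), Real.rpow_neg (by positivity)]
  ring

/-- The `y`-dependence is split off as the factor `(A + B y)^(-p)`, so that continuity in `y`
reduces to continuity of `y ↦ ∫_y^{2y} g` for a fixed `g`. -/
theorem continuousOn_windowIntegral (hA : 0 < A) (hB : 0 ≤ B) :
    ContinuousOn (windowIntegral A B p) (Ioi 0) := by
  have hg : ContinuousOn (fun z => (1 / z) * (A + B * z) ^ p) (Ioi 0) :=
    (continuousOn_const.div continuousOn_id fun z (hz : 0 < z) => hz.ne').mul
      (ContinuousOn.rpow_const (by fun_prop) fun z (hz : 0 < z) => Or.inl (by positivity))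
  refine (ContinuousOn.mul (ContinuousOn.rpow_const (by fun_prop)
    fun y (hy : 0 < y) => Or.inl (by positivity)) (continuousOn_integral_two_mul hg)).congr
    fun y hy => windowIntegral_eq hA hB hy

theorem intervalIntegrable_inv_affine_mul_windowIntegral (hA : 0 < A) (hB : 0 ≤ B)
    (hp : p ≤ 0) {r : ℝ} (hr : 0 ≤ r) :
    IntervalIntegrable (fun y => (A + B * y)⁻¹ * windowIntegral A B p y) volume 0 r := by
  refine (intervalIntegrable_const (c := A⁻¹ * Real.log 2)).mono_fun' ?_ ?_
  · rw [uIoc_of_le hr]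
    refine ContinuousOn.aestronglyMeasurable ?_ measurableSet_Ioc
    exact (ContinuousOn.mul (ContinuousOn.inv₀ (by fun_prop) fun y (hy : 0 < y) => by
      positivity) (continuousOn_windowIntegral hA hB)).mono Ioc_subset_Ioi_self
  · refine ae_restrict_of_forall_mem measurableSet_uIoc fun y hy => ?_
    rw [uIoc_of_le hr] at hy
    have hy0 : 0 < y := hy.1
    have hW : 0 ≤ windowIntegral A B p y :=
      le_trans (by positivity) (two_rpow_mul_log_two_le_windowIntegral hA hB hp hy0)
    dsimp only
    rw [Real.norm_of_nonneg (by positivity)]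
    exact mul_le_mul (inv_anti₀ hA (by nlinarith)) (windowIntegral_le_log_two hA hB hp hy0) hW
      (by positivity)

theorem two_rpow_mul_log_two_div_mul_log_le_integral (hA : 0 < A) (hB : 0 < B) (hp : p ≤ 0)
    {r : ℝ} (hr : 0 ≤ r) :
    2 ^ p * Real.log 2 / B * Real.log (1 + B * r / A) ≤
      ∫ y in (0 : ℝ)..r, (A + B * y)⁻¹ * windowIntegral A B p y := by
  calc 2 ^ p * Real.log 2 / B * Real.log (1 + B * r / A)
      = ∫ y in (0 : ℝ)..r, (A + B * y)⁻¹ * (2 ^ p * Real.log 2) := by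
        rw [intervalIntegral.integral_mul_const, integral_inv_affine hA hB hr]
        ring
    _ ≤ _ := by
      refine integral_mono_on_of_le_Ioo hr ?_
        (intervalIntegrable_inv_affine_mul_windowIntegral hA hB.le hp hr) fun y hy => ?_
      · refine ContinuousOn.intervalIntegrable_of_Icc hr ?_
        exact (ContinuousOn.inv₀ (by fun_prop) fun y hy => by
          have : 0 ≤ y := hy.1
          positivity).mul_const _
      · have hy0 : 0 < y := hy.1
        exact mul_le_mul_of_nonneg_left (two_rpow_mul_log_two_le_windowIntegral hA hB.le hp hy0)
          (by positivity)

end Window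

/-- Lower bound for `r_ε(0+)` in Lemma 6.2(1): for `A, B > 0`, `κ ∈ (0,1)`,
`δ ∈ (0,1)`, `x_* > 0`,
`(1/(1+δ))·∫₀^{x_*/2} (A+By)⁻¹ ∫_y^{2y} (1/z)((A+Bz)/(A+By))^{κ-1} dz dy
≥ (2^{κ-1} ln 2/((1+δ)B))·ln(1 + Bx_*/(2A))`. -/
theorem stmt16 (A B κ δ xs : ℝ)
    (hA : 0 < A) (hB : 0 < B) (hκ : κ ∈ Set.Ioo (0 : ℝ) 1)
    (hδ : δ ∈ Set.Ioo (0 : ℝ) 1) (hxs : 0 < xs) :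
    ((2 : ℝ) ^ (κ - 1) * Real.log 2 / ((1 + δ) * B)) * Real.log (1 + B * xs / (2 * A))
      ≤ (1 / (1 + δ)) * ∫ y in (0 : ℝ)..(xs / 2),
          (A + B * y)⁻¹ * ∫ z in y..(2 * y), (1 / z) * ((A + B * z) / (A + B * y)) ^ (κ - 1) := by
  have key := two_rpow_mul_log_two_div_mul_log_le_integral hA hB
    (by linarith [hκ.2] : κ - 1 ≤ 0) (by positivity : 0 ≤ xs / 2)
  have h1δ : 0 < 1 + δ := by linarith [hδ.1]
  rw [show B * (xs / 2) / A = B * xs / (2 * A) by ring] at key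
  calc _ = (1 / (1 + δ)) * (2 ^ (κ - 1) * Real.log 2 / B * Real.log (1 + B * xs / (2 * A))) := by
        field_simp
    _ ≤ _ := mul_le_mul_of_nonneg_left key (by positivity)
end
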